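/- Let R be a commutative ring and α, β, r, x ∈ R. For all integers m, n ≥ 0: B_{m+n;α,β,r}(x) = Σ_{i=0}^{n} Σ_{j=0}^{m} C(n,i) · x^j · S(m,j;α,β,r) · B_{i;α,β,r}(x) · ∏_{ℓ=0}^{n-i-1} ((m+ℓ)·α + j·β), where C(n,i) is the binomial coefficient and integer multiples (m+ℓ)·α, j·β are taken in R. -/

import Mathlib

open Finset

/-- The generalized Stirling numbers of Hsu and Shiue, with values in a commutative
ring `R`: `HS α β r 0 0 = 1`, `HS α β r n k = 0` for `k < 0` or `k > n`, and
`HS α β r n k = HS α β r (n-1) (k-1) + (α(n-1) + βk + r) * HS α β r (n-1) k` otherwise. -/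
def HS {R : Type*} [CommRing R] (α β r : R) : ℕ → ℤ → R
  | 0, k => if k = 0 then 1 else 0
  | n + 1, k =>
      if k < 0 ∨ ((n : ℤ) + 1) < k then 0
      else HS α β r n (k - 1) + (α * (n : R) + β * (k : R) + r) * HS α β r n k

/-- The generalized Bell polynomial B_{n;α,β,r}(x) = Σ_{k=0}^{n} S(n,k;α,β,r) x^k. -/
def genBell {R : Type*} [CommRing R] (α β r x : R) (n : ℕ) : R :=
  ∑ k ∈ range (n + 1), HS α β r n (k : ℤ) * x ^ k

/-! The polynomials `B_n = bellPoly α β r n` satisfy `B_{N+1} = D_N B_N` for the linear operator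
`D_N = X + αN + r + βX d/dX`, and `D_{i+d} (X^j B_i) = X^j B_{i+1} + (dα + jβ) X^j B_i`.
So, for fixed `j`, each of `D_m, …, D_{m+n-1}` applied to `X^j B_0` either raises the index of
`B` or contributes the next factor `(m+ℓ)α + jβ`, and Pascal's rule collects the terms into a
binomial sum. Starting from `B_m = Σ_j S(m,j) X^j B_0` and evaluating at `x` gives the theorem. -/

open Polynomial

section

variable {R : Type*} [CommRing R]

theorem map_sum_choose_nsmul_prod_smul {M : Type*} [AddCommMonoid M] [Module R M]
    (L : M →ₗ[R] M) (v : ℕ → M) (q : ℕ → R) (n : ℕ)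
    (hL : ∀ i ≤ n, L (v i) = v (i + 1) + q (n - i) • v i) :
    L (∑ i ∈ range (n + 1), n.choose i • (∏ ℓ ∈ range (n - i), q ℓ) • v i) =
      ∑ i ∈ range (n + 2), (n + 1).choose i • (∏ ℓ ∈ range (n + 1 - i), q ℓ) • v i := by
  rw [sum_choose_succ_nsmul (fun i k ↦ (∏ ℓ ∈ range k, q ℓ) • v i), map_sum, ← sum_add_distrib]
  refine sum_congr rfl fun i hi ↦ ?_
  have hi : i ≤ n := mem_range_succ_iff.mp hi
  rw [map_nsmul, map_smul, hL i hi, show n + 1 - i = n - i + 1 by omega, prod_range_succ,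
    mul_smul, smul_add, nsmul_add, add_comm]

theorem X_mul_derivative_X_pow (j : ℕ) : X * derivative (X ^ j : R[X]) = (j : R[X]) * X ^ j := by
  rcases j with _ | j
  · simp
  · rw [derivative_X_pow, C_eq_natCast, Nat.add_sub_cancel, pow_succ]
    ring

variable (α β r : R)

theorem HS_of_neg {n : ℕ} {k : ℤ} (hk : k < 0) : HS α β r n k = 0 := by
  cases n with
  | zero => rw [HS, if_neg (by omega)]
  | succ n => rw [HS, if_pos (Or.inl hk)]

theorem HS_of_lt {n : ℕ} {k : ℤ} (hk : (n : ℤ) < k) : HS α β r n k = 0 := by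
  cases n with
  | zero => rw [HS, if_neg (by omega)]
  | succ n => rw [HS, if_pos (Or.inr (by omega))]

theorem HS_succ (n : ℕ) {k : ℤ} (hk : 0 ≤ k) :
    HS α β r (n + 1) k = HS α β r n (k - 1) + (α * n + β * k + r) * HS α β r n k := by
  by_cases hkn : k ≤ n + 1
  · rw [HS, if_neg (by omega)]
  · rw [HS_of_lt _ _ _ (by omega), HS_of_lt _ _ _ (by omega), HS_of_lt _ _ _ (by omega)]
    ring

noncomputable def bellPoly (n : ℕ) : R[X] :=
  ∑ k ∈ range (n + 1), C (HS α β r n k) * X ^ k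

theorem coeff_bellPoly (n k : ℕ) : (bellPoly α β r n).coeff k = HS α β r n k := by
  simp only [bellPoly, finsetSum_coeff, coeff_C_mul_X_pow, sum_ite_eq, mem_range]
  split_ifs with hk
  · rfl
  · rw [HS_of_lt _ _ _ (by omega)]

theorem eval_bellPoly (x : R) (n : ℕ) : (bellPoly α β r n).eval x = genBell α β r x n := by
  simp [bellPoly, genBell, eval_finsetSum]

noncomputable def bellStep (N : ℕ) : R[X] →ₗ[R] R[X] :=
  LinearMap.mulLeft R (X + C (α * N + r)) + β • LinearMap.mulLeft R X ∘ₗ derivative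

theorem bellStep_apply (N : ℕ) (p : R[X]) :
    bellStep α β r N p = (X + C (α * N + r)) * p + β • (X * derivative p) := rfl

theorem bellPoly_succ (n : ℕ) : bellPoly α β r (n + 1) = bellStep α β r n (bellPoly α β r n) := by
  ext k
  rcases k with _ | k
  · simp [bellStep_apply, coeff_bellPoly, HS_succ, HS_of_neg]
  · simp only [bellStep_apply, add_mul, coeff_add, coeff_X_mul, coeff_C_mul, coeff_smul,
      coeff_derivative, coeff_bellPoly, smul_eq_mul]
    rw [HS_succ _ _ _ _ (by positivity)]
    push_cast
    rw [add_sub_cancel_right]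
    ring

theorem bellStep_X_pow_mul_bellPoly (i d j : ℕ) :
    bellStep α β r (i + d) (X ^ j * bellPoly α β r i) =
      X ^ j * bellPoly α β r (i + 1) + ((d : R) * α + (j : R) * β) • (X ^ j * bellPoly α β r i) := by
  rw [bellPoly_succ, bellStep_apply, bellStep_apply, derivative_mul]
  simp only [smul_eq_C_mul, map_add, map_mul, map_natCast, Nat.cast_add]
  linear_combination (C β * bellPoly α β r i) * X_mul_derivative_X_pow (R := R) j

theorem bellPoly_add (m n : ℕ) :
    bellPoly α β r (m + n) =
      ∑ j ∈ range (m + 1), HS α β r m j • ∑ i ∈ range (n + 1),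
        n.choose i • (∏ ℓ ∈ range (n - i), (((m + ℓ : ℕ) : R) * α + (j : R) * β)) •
          (X ^ j * bellPoly α β r i) := by
  induction n with
  | zero => simp [bellPoly, HS, smul_eq_C_mul]
  | succ n ih =>
    rw [← add_assoc, bellPoly_succ, ih, map_sum]
    refine sum_congr rfl fun j _ ↦ ?_
    rw [map_smul, map_sum_choose_nsmul_prod_smul _ _ _ n fun i hi ↦ ?_]
    have hstep := bellStep_X_pow_mul_bellPoly α β r i (m + (n - i)) j
    rwa [show i + (m + (n - i)) = m + n by omega] at hstep

end

theorem genBell_add {R : Type*} [CommRing R] (α β r x : R) (m n : ℕ) :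
    genBell α β r x (m + n) =
      ∑ i ∈ range (n + 1), ∑ j ∈ range (m + 1),
        (n.choose i : R) * x ^ j * HS α β r m (j : ℤ) * genBell α β r x i *
          ∏ ℓ ∈ range (n - i), (((m + ℓ : ℕ) : R) * α + (j : R) * β) := by
  have h := congrArg (eval x) (bellPoly_add α β r m n)
  simp only [eval_bellPoly, eval_finsetSum, eval_smul, eval_mul, eval_pow, eval_X, eval_natCast,
    smul_eq_mul, nsmul_eq_mul, mul_sum] at h
  rw [h, sum_comm]
  refine sum_congr rfl fun i _ ↦ sum_congr rfl fun j _ ↦ ?_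
  ring
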